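/- arXiv:2204.11708 — 2 statements merged into one kernel-verified Lean document; each statement's English description precedes it below -/
import Mathlib

section
/- In the LLG auction with b₁ + b₂ ≥ b_G, the VN payment of local bidder 1 is given explicitly by p₁^{VN} = min(b₁, max(p₁^V, (b_G + p₁^V − p₂^V)/2)) where p₁^V = max(b_G − b₂, 0) and p₂^V = max(b_G − b₁, 0), whenever p₁^V + p₂^V ≤ b_G. -/
/-- Explicit formula for the VN payment of local bidder 1 in the LLG auction:
p₁ = min(b₁, max(p₁ᵥ, (b_G + p₁ᵥ − p₂ᵥ)/2)) is the point of the minimum-revenue core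
{p₁+p₂ = b_G, 0 ≤ pᵢ ≤ bᵢ} closest to the VCG point. -/
theorem stmt_5 (b₁ b₂ bG : ℝ) (hb₁ : 0 ≤ b₁) (hb₂ : 0 ≤ b₂) (hbG : 0 ≤ bG)
    (hwin : bG ≤ b₁ + b₂)
    (p₁V p₂V : ℝ) (h₁V : p₁V = max (bG - b₂) 0) (h₂V : p₂V = max (bG - b₁) 0)
    (hV : p₁V + p₂V ≤ bG)
    (p₁VN : ℝ) (hVN : p₁VN = min b₁ (max p₁V ((bG + p₁V - p₂V) / 2))) :
    0 ≤ p₁VN ∧ p₁VN ≤ b₁ ∧ 0 ≤ bG - p₁VN ∧ bG - p₁VN ≤ b₂ ∧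
    (∀ q₁ q₂ : ℝ, q₁ + q₂ = bG → 0 ≤ q₁ → q₁ ≤ b₁ → 0 ≤ q₂ → q₂ ≤ b₂ →
      (p₁VN - p₁V) ^ 2 + ((bG - p₁VN) - p₂V) ^ 2 ≤ (q₁ - p₁V) ^ 2 + (q₂ - p₂V) ^ 2) := by
  set m : ℝ := (bG + p₁V - p₂V) / 2 with hm
  have h1pos : 0 ≤ p₁V := by rw [h₁V]; exact le_max_right _ _
  have h2pos : 0 ≤ p₂V := by rw [h₂V]; exact le_max_right _ _
  have h1b : bG - b₂ ≤ p₁V := by rw [h₁V]; exact le_max_left _ _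
  have h2b : bG - b₁ ≤ p₂V := by rw [h₂V]; exact le_max_left _ _
  have h1le : p₁V ≤ b₁ := by
    rw [h₁V]; apply max_le <;> linarith
  have h1bG : p₁V ≤ bG := by linarith
  have hmbG : m ≤ bG := by rw [hm]; linarith
  have key : ∀ q₁ : ℝ, p₁V ≤ q₁ → q₁ ≤ b₁ →
      (p₁VN - p₁V) ^ 2 + ((bG - p₁VN) - p₂V) ^ 2 ≤ (q₁ - p₁V) ^ 2 + ((bG - q₁) - p₂V) ^ 2 := by
    intro q₁ hq1 hq2
    rcases le_total m p₁V with h | h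
    · have : p₁VN = p₁V := by
        rw [hVN, max_eq_left h, min_eq_right h1le]
      rw [this]; nlinarith [sq_nonneg (q₁ - p₁V)]
    · rcases le_total b₁ m with h' | h'
      · have : p₁VN = b₁ := by
          rw [hVN, max_eq_right h, min_eq_left h']
        rw [this]; nlinarith [sq_nonneg (b₁ - q₁)]
      · have : p₁VN = m := by
          rw [hVN, max_eq_right h, min_eq_right h']
        rw [this]; nlinarith [sq_nonneg (q₁ - m)]
  have hub : p₁VN ≤ b₁ := by rw [hVN]; exact min_le_left _ _
  have hlb : p₁V ≤ p₁VN := by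
    rw [hVN]
    exact le_min h1le (le_max_left _ _)
  have hbGub : p₁VN ≤ bG := by
    rw [hVN]
    exact le_trans (min_le_right _ _) (max_le h1bG hmbG)
  refine ⟨by linarith, hub, by linarith, by linarith, ?_⟩
  intro q₁ q₂ hq hq1 hq2 hq3 hq4
  have hq2' : q₂ = bG - q₁ := by linarith
  subst hq2'
  exact key q₁ (by rw [h₁V]; exact max_le (by linarith) hq1) hq2
end

section
/- In the LLG auction with the locals winning (b₁ + b₂ ≥ b_G), the VN payment of local bidder 1 is non-decreasing in b₁: if b₁' ≥ b₁ and b₁ + b₂ ≥ b_G, then p₁^{VN}(b₁', b₂, b_G) ≥ p₁^{VN}(b₁, b₂, b_G). -/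
/-- The explicit VN payment of local bidder 1 in the LLG auction. -/
noncomputable def p₁VN (b₁ b₂ bG : ℝ) : ℝ :=
  min b₁ (max (max (bG - b₂) 0) ((bG + max (bG - b₂) 0 - max (bG - b₁) 0) / 2))

/-- The VN payment of local bidder 1 in the LLG auction is non-decreasing in b₁. -/
theorem stmt_6 (b₁ b₁' b₂ bG : ℝ) (hb₁ : 0 ≤ b₁) (hb₂ : 0 ≤ b₂) (hbG : 0 ≤ bG)
    (hwin : bG ≤ b₁ + b₂) (hinc : b₁ ≤ b₁') :
    p₁VN b₁ b₂ bG ≤ p₁VN b₁' b₂ bG := by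
  unfold p₁VN
  apply min_le_min hinc
  apply max_le_max le_rfl
  apply div_le_div_of_nonneg_right ?_ (by norm_num) |>.trans le_rfl
  have : max (bG - b₁') 0 ≤ max (bG - b₁) 0 := max_le_max (by linarith) le_rfl
  linarith
end
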